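/- arXiv:2501.07673 — 7 statements merged into one kernel-verified Lean document; each statement's English description precedes it below -/
import Mathlib

section
/- Let L be a frame, X its Priestley space, and j a nucleus on L. Then H_j = ↑N_j; that is, the intersection of the sets φ(a) taken over all j-dense elements a (those with j a = 1) equals the upward closure of the nuclear set N_j in X. -/
/-- A prime filter of a frame (bounded distributive lattice):
contains `⊤`, omits `⊥`, is an upset, is closed under `⊓`, and is prime. -/
def IsPrimeFilter {L : Type*} [Order.Frame L] (x : Set L) : Prop :=
  (⊤ : L) ∈ x ∧ (⊥ : L) ∉ x ∧
  (∀ a b : L, a ∈ x → a ≤ b → b ∈ x) ∧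
  (∀ a b : L, a ∈ x → b ∈ x → a ⊓ b ∈ x) ∧
  (∀ a b : L, a ⊔ b ∈ x → a ∈ x ∨ b ∈ x)

section Aux

variable {L : Type*} [Order.Frame L] (j : L → L)
  (hj1 : ∀ a : L, a ≤ j a) (hj2 : ∀ a : L, j (j a) ≤ j a)
  (hj3 : ∀ a b : L, j a ⊓ j b = j (a ⊓ b))

include hj3 in
lemma j_mono : Monotone j := by
  intro a b hab
  have := hj3 a b
  rw [inf_eq_left.2 hab] at this
  exact le_of_inf_eq this

include hj1 hj2 in
lemma j_idem (a : L) : j (j a) = j a := le_antisymm (hj2 a) (hj1 (j a))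

include hj1 hj2 hj3 in
lemma j_sup (a b : L) : j (j a ⊔ j b) = j (a ⊔ b) := by
  apply le_antisymm
  · calc j (j a ⊔ j b) ≤ j (j (a ⊔ b)) := by
          apply j_mono j hj3
          exact sup_le (j_mono j hj3 le_sup_left) (j_mono j hj3 le_sup_right)
        _ ≤ j (a ⊔ b) := hj2 _
  · exact j_mono j hj3 (sup_le_sup (hj1 a) (hj1 b))

include hj1 in
lemma j_top : j ⊤ = ⊤ := le_antisymm le_top (hj1 ⊤)

/-- A finite sup in a prime filter has a member in the filter. -/
lemma finset_sup_mem {z : Set L} (hz : IsPrimeFilter z) (s : Finset L)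
    (h : s.sup id ∈ z) : ∃ a ∈ s, a ∈ z := by
  classical
  induction s using Finset.induction_on with
  | empty => simp at h; exact absurd h hz.2.1
  | @insert a s ha ih =>
      rw [Finset.sup_insert] at h
      rcases hz.2.2.2.2 _ _ h with h1 | h2
      · exact ⟨a, Finset.mem_insert_self _ _, h1⟩
      · obtain ⟨b, hb, hbz⟩ := ih h2
        exact ⟨b, Finset.mem_insert_of_mem hb, hbz⟩

end Aux

/-- For a frame `L` with Priestley space `X` (the prime filters of `L`
ordered by inclusion) and a nucleus `j` on `L`, the set
`H_j = ⋂ {φ a : j a = ⊤}` equals the upward closure `↑N_j` of the nuclear set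
`N_j = {x : j ⁻¹' x = x}` in `X`. -/
theorem statement0 {L : Type*} [Order.Frame L] (j : L → L)
    (hj1 : ∀ a : L, a ≤ j a) (hj2 : ∀ a : L, j (j a) ≤ j a)
    (hj3 : ∀ a b : L, j a ⊓ j b = j (a ⊓ b)) :
    {x : Set L | IsPrimeFilter x ∧ ∀ a : L, j a = ⊤ → a ∈ x} =
      {z : Set L | IsPrimeFilter z ∧
        ∃ x : Set L, (IsPrimeFilter x ∧ j ⁻¹' x = x) ∧ x ⊆ z} := by
  classical
  have jmono := j_mono j hj3
  have jidem := j_idem j hj1 hj2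
  have jsup := j_sup j hj1 hj2 hj3
  have jtop := j_top j hj1
  ext z
  simp only [Set.mem_setOf_eq]
  constructor
  · rintro ⟨hz, hdense⟩
    refine ⟨hz, ?_⟩
    -- Work in the fixpoint lattice
    set Fix := {a : L // j a = a} with hFix
    letI : Lattice Fix :=
      { (inferInstance : PartialOrder Fix) with
        sup := fun a b => ⟨j (a.1 ⊔ b.1), jidem _⟩
        le_sup_left := fun a b => show a.1 ≤ j (a.1 ⊔ b.1) from
          le_sup_left.trans (hj1 _)
        le_sup_right := fun a b => show b.1 ≤ j (a.1 ⊔ b.1) from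
          le_sup_right.trans (hj1 _)
        sup_le := fun a b c hac hbc => show j (a.1 ⊔ b.1) ≤ c.1 from
          c.2 ▸ jmono (sup_le hac hbc)
        inf := fun a b => ⟨a.1 ⊓ b.1, by rw [← hj3, a.2, b.2]⟩
        inf_le_left := fun a b => show a.1 ⊓ b.1 ≤ a.1 from inf_le_left
        inf_le_right := fun a b => show a.1 ⊓ b.1 ≤ b.1 from inf_le_right
        le_inf := fun a b c hab hac => show a.1 ≤ b.1 ⊓ c.1 from le_inf hab hac }
    letI : DistribLattice Fix :=
      { (inferInstance : Lattice Fix) with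
        le_sup_inf := by
          rintro ⟨x, hx⟩ ⟨y, hy⟩ ⟨w, hw⟩
          show (j (x ⊔ y) ⊓ j (x ⊔ w) : L) ≤ j (x ⊔ y ⊓ w)
          rw [hj3, ← sup_inf_left] }
    letI : BoundedOrder Fix :=
      { top := ⟨⊤, jtop⟩
        le_top := fun a => show a.1 ≤ ⊤ from le_top
        bot := ⟨j ⊥, jidem _⟩
        bot_le := fun a => show j ⊥ ≤ a.1 from a.2 ▸ jmono bot_le }
    -- the ideal generated by { j a : a ∉ z }
    set Icar : Set Fix := {c : Fix | ∃ s : Finset L, (∀ a ∈ s, a ∉ z) ∧ c.1 ≤ j (s.sup id)}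
      with hIcar
    have hIbot : (⊥ : Fix) ∈ Icar := ⟨∅, by simp, by simp only [Finset.sup_empty]; exact le_rfl⟩
    set I : Order.Ideal Fix :=
      { carrier := Icar
        lower' := by
          rintro c d hdc ⟨s, hs, hcs⟩
          exact ⟨s, hs, le_trans hdc hcs⟩
        nonempty' := ⟨⊥, hIbot⟩
        directed' := by
          rintro c ⟨s, hs, hcs⟩ d ⟨t, ht, hdt⟩
          refine ⟨⟨j ((s ∪ t).sup id), jidem _⟩, ⟨s ∪ t, ?_, le_rfl⟩, ?_, ?_⟩
          · intro a ha
            rcases Finset.mem_union.1 ha with h | h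
            · exact hs a h
            · exact ht a h
          · show c.1 ≤ j ((s ∪ t).sup id)
            exact le_trans hcs (jmono (Finset.sup_mono Finset.subset_union_left))
          · show d.1 ≤ j ((s ∪ t).sup id)
            exact le_trans hdt (jmono (Finset.sup_mono Finset.subset_union_right)) }
      with hI
    have hnotmemI : (⊤ : Fix) ∉ I := by
      rintro ⟨s, hs, hts⟩
      have htop : j (s.sup id) = ⊤ := le_antisymm le_top hts
      have : s.sup id ∈ z := hdense _ htop
      obtain ⟨a, ha, haz⟩ := finset_sup_mem hz s this
      exact hs a ha haz
    have hdisj : Disjoint ((Order.PFilter.principal (⊤ : Fix)) : Set Fix) (I : Set Fix) := by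
      rw [Set.disjoint_left]
      rintro c hc hcI
      have hce : c = ⊤ := le_antisymm le_top hc
      exact hnotmemI (hce ▸ hcI)
    obtain ⟨J, hJprime, hIJ, hJdisj⟩ :=
      DistribLattice.prime_ideal_of_disjoint_filter_ideal hdisj
    have htopJ : (⊤ : Fix) ∉ J := by
      intro h
      exact Set.disjoint_left.1 hJdisj (Order.PFilter.mem_principal.2 le_rfl) h
    -- the candidate prime filter
    set y : Set L := {a : L | (⟨j a, jidem a⟩ : Fix) ∉ J} with hy
    have hysub : y ⊆ z := by
      intro a ha
      by_contra haz
      apply ha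
      apply hIJ
      exact ⟨{a}, by simpa using haz, by simp⟩
    have hymem : ∀ a : L, a ∈ y ↔ (⟨j a, jidem a⟩ : Fix) ∉ J := fun a => Iff.rfl
    refine ⟨y, ⟨⟨?_, ?_, ?_, ?_, ?_⟩, ?_⟩, hysub⟩
    · -- ⊤ ∈ y
      show (⟨j ⊤, _⟩ : Fix) ∉ J
      intro h
      apply htopJ
      have : (⟨j ⊤, jidem ⊤⟩ : Fix) = ⊤ := Subtype.ext jtop
      exact this ▸ h
    · -- ⊥ ∉ y
      show ¬ (⟨j ⊥, _⟩ : Fix) ∉ J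
      intro h
      exact h (J.lower (le_refl _) (hIJ hIbot))
    · -- upset
      intro a b ha hab h
      exact ha (J.lower (show (⟨j a, _⟩ : Fix) ≤ ⟨j b, _⟩ from jmono hab) h)
    · -- meets
      intro a b ha hb hab
      have heq : (⟨j (a ⊓ b), jidem _⟩ : Fix) =
          (⟨j a, jidem a⟩ : Fix) ⊓ (⟨j b, jidem b⟩ : Fix) := Subtype.ext (hj3 a b).symm
      rcases hJprime.mem_or_mem (heq ▸ hab) with h | h
      · exact ha h
      · exact hb h
    · -- prime
      intro a b hab
      by_contra hcon
      push_neg at hcon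
      obtain ⟨ha, hb⟩ := hcon
      have ha' : (⟨j a, jidem a⟩ : Fix) ∈ J := not_not.1 ha
      have hb' : (⟨j b, jidem b⟩ : Fix) ∈ J := not_not.1 hb
      have hsupJ : (⟨j a, jidem a⟩ : Fix) ⊔ (⟨j b, jidem b⟩ : Fix) ∈ J :=
        Order.Ideal.sup_mem ha' hb'
      have heq : (⟨j a, jidem a⟩ : Fix) ⊔ (⟨j b, jidem b⟩ : Fix)
          = (⟨j (a ⊔ b), jidem _⟩ : Fix) := Subtype.ext (jsup a b)
      exact hab (heq ▸ hsupJ)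
    · -- j ⁻¹' y = y
      ext a
      show (⟨j (j a), _⟩ : Fix) ∉ J ↔ (⟨j a, _⟩ : Fix) ∉ J
      constructor <;> intro h hmem <;> apply h
      · convert hmem using 2; exact jidem a
      · convert hmem using 2; exact (jidem a).symm
  · rintro ⟨hz, x, ⟨hx, hfix⟩, hxz⟩
    refine ⟨hz, fun a ha => ?_⟩
    have : j a ∈ x := ha ▸ hx.1
    have : a ∈ j ⁻¹' x := this
    rw [hfix] at this
    exact hxz this
end

section
/- For every Scott-open filter F of a frame L there exists a nucleus j on L such that F = {a ∈ L : j a = 1}; that is, every Scott-open filter of a frame is admissible. -/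
/-- Every Scott-open filter of a frame is admissible: for every
Scott-open filter `F` of a frame `L` there is a nucleus `j` on `L` with
`F = {a : j a = ⊤}`. -/
theorem statement1 {L : Type*} [Order.Frame L] (F : Set L)
    (htop : (⊤ : L) ∈ F)
    (hup : ∀ a b : L, a ∈ F → a ≤ b → b ∈ F)
    (hinf : ∀ a b : L, a ∈ F → b ∈ F → a ⊓ b ∈ F)
    (hScott : ∀ D : Set L, D.Nonempty → DirectedOn (· ≤ ·) D → sSup D ∈ F →
      ∃ d ∈ D, d ∈ F) :
    ∃ j : L → L, (∀ a : L, a ≤ j a) ∧ (∀ a : L, j (j a) ≤ j a) ∧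
      (∀ a b : L, j a ⊓ j b = j (a ⊓ b)) ∧ F = {a : L | j a = ⊤} := by
  classical
  set C : Set L := {c | ∀ f ∈ F, f ⇨ c ≤ c} with hC
  set j : L → L := fun a => sInf {c | c ∈ C ∧ a ≤ c} with hj
  have hle : ∀ a, a ≤ j a := fun a => le_sInf fun c hc => hc.2
  have hmemC : ∀ a, j a ∈ C := by
    intro a f hf
    refine le_sInf fun c hc => ?_
    calc f ⇨ j a ≤ f ⇨ c := himp_le_himp_left (sInf_le hc)
      _ ≤ c := hc.1 f hf
  have hidem : ∀ a, j (j a) ≤ j a := fun a => sInf_le ⟨hmemC a, le_rfl⟩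
  have hmono : ∀ a b : L, a ≤ b → j a ≤ j b := fun a b h =>
    le_sInf fun c hc => sInf_le ⟨hc.1, h.trans hc.2⟩
  have hclaim : ∀ c d : L, c ⊓ j d ≤ j (c ⊓ d) := by
    intro c d
    rw [inf_comm, ← le_himp_iff]
    refine sInf_le ⟨?_, ?_⟩
    · intro f hf
      have h1 : f ⇨ (c ⇨ j (c ⊓ d)) = c ⇨ (f ⇨ j (c ⊓ d)) := by
        rw [himp_himp, himp_himp, inf_comm]
      rw [h1]
      exact himp_le_himp_left (hmemC _ f hf)
    · rw [le_himp_iff, inf_comm]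
      exact hle _
  have hmeet : ∀ a b : L, j a ⊓ j b = j (a ⊓ b) := by
    intro a b
    refine le_antisymm ?_ (le_inf (hmono _ _ inf_le_left) (hmono _ _ inf_le_right))
    calc j a ⊓ j b ≤ j (j a ⊓ b) := hclaim _ _
      _ ≤ j (j (a ⊓ b)) := hmono _ _ (by
          rw [inf_comm (j a) b, inf_comm a b]
          exact hclaim b a)
      _ ≤ j (a ⊓ b) := hidem _
  refine ⟨j, hle, hidem, hmeet, ?_⟩
  ext a
  constructor
  · intro ha
    have h1 : a ⇨ j a ≤ j a := hmemC a a ha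
    have h2 : a ⇨ j a = ⊤ := himp_eq_top_iff.2 (hle a)
    simpa [h2] using (eq_top_iff.2 (h2 ▸ h1) : j a = ⊤)
  · intro ha
    have ha : j a = ⊤ := ha
    by_contra hna
    set A : Set L := {x | a ≤ x ∧ x ∉ F} with hA
    obtain ⟨m, ham, hmA, hmax⟩ :
        ∃ m, a ≤ m ∧ m ∈ A ∧ ∀ z ∈ A, m ≤ z → z = m := by
      have hch : ∀ c ⊆ A, IsChain (· ≤ ·) c → ∀ y ∈ c, ∃ ub ∈ A, ∀ z ∈ c, z ≤ ub := by
        intro c hcA hchain y hy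
        refine ⟨sSup c, ⟨(hcA hy).1.trans (le_sSup hy), ?_⟩, fun z hz => le_sSup hz⟩
        intro hs
        obtain ⟨d, hd, hdF⟩ := hScott c ⟨y, hy⟩ hchain.directedOn hs
        exact (hcA hd).2 hdF
      obtain ⟨m, ham, hm⟩ := zorn_le_nonempty₀ A hch a ⟨le_rfl, hna⟩
      exact ⟨m, ham, hm.prop, fun z hz hmz => le_antisymm (hm.le_of_ge hz hmz) hmz⟩
    set D : Set L := (fun f => f ⇨ m) '' F with hD
    have hmD : m ∈ D := ⟨⊤, htop, top_himp⟩
    have hDne : D.Nonempty := ⟨_, hmD⟩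
    have hDdir : DirectedOn (· ≤ ·) D := by
      rintro x ⟨f, hf, rfl⟩ y ⟨g, hg, rfl⟩
      exact ⟨(f ⊓ g) ⇨ m, ⟨f ⊓ g, hinf f g hf hg, rfl⟩,
        himp_le_himp_right inf_le_left, himp_le_himp_right inf_le_right⟩
    have hsD : sSup D ∈ A := by
      refine ⟨(hmA.1).trans (le_sSup hmD), ?_⟩
      intro h
      obtain ⟨d, ⟨f, hf, rfl⟩, hdF⟩ := hScott D hDne hDdir h
      exact hmA.2 (hup _ _ (hinf f _ hf hdF) inf_himp_le)
    have heq : sSup D = m := hmax _ hsD (le_sSup hmD)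
    have hmC : m ∈ C := by
      intro f hf
      have hfm : f ⇨ m ≤ sSup D := le_sSup ⟨f, hf, rfl⟩
      rwa [heq] at hfm
    have hjm : j a ≤ m := sInf_le ⟨hmC, hmA.1⟩
    rw [ha, top_le_iff] at hjm
    exact hmA.2 (hjm ▸ htop)
end

section
/- Let L be a frame, X its Priestley space, and j a nucleus on L. Then j 0 = 0 if and only if max X ⊆ N_j, where max X is the set of maximal points of X; that is, j is a dense nucleus exactly when its nuclear set N_j is cofinal. -/
/-- A (not necessarily prime) proper filter. -/
def IsProperFilter {L : Type*} [Order.Frame L] (x : Set L) : Prop :=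
  (⊤ : L) ∈ x ∧ (⊥ : L) ∉ x ∧
  (∀ a b : L, a ∈ x → a ≤ b → b ∈ x) ∧
  (∀ a b : L, a ∈ x → b ∈ x → a ⊓ b ∈ x)

/-- Every proper filter extends to a proper filter maximal among proper filters. -/
theorem exists_max_filter {L : Type*} [Order.Frame L] {F : Set L}
    (hF : IsProperFilter F) :
    ∃ M, IsProperFilter M ∧ F ⊆ M ∧
      ∀ G, IsProperFilter G → M ⊆ G → G = M := by
  obtain ⟨M, hMm⟩ := zorn_subset_nonempty {G | IsProperFilter G ∧ F ⊆ G}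
    (fun c hc hchain hne => by
      refine ⟨⋃₀ c, ⟨⟨?_, ?_, ?_, ?_⟩, ?_⟩, fun s hs => Set.subset_sUnion_of_mem hs⟩
      · obtain ⟨s, hs⟩ := hne
        exact ⟨s, hs, (hc hs).1.1⟩
      · rintro ⟨s, hs, hbot⟩
        exact (hc hs).1.2.1 hbot
      · rintro a b ⟨s, hs, ha⟩ hab
        exact ⟨s, hs, (hc hs).1.2.2.1 a b ha hab⟩
      · rintro a b ⟨s, hs, ha⟩ ⟨t, ht, hb⟩
        rcases hchain.total hs ht with h | h
        · exact ⟨t, ht, (hc ht).1.2.2.2 a b (h ha) hb⟩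
        · exact ⟨s, hs, (hc hs).1.2.2.2 a b ha (h hb)⟩
      · obtain ⟨s, hs⟩ := hne
        exact (hc hs).2.trans (Set.subset_sUnion_of_mem hs))
    F ⟨hF, subset_rfl⟩
  obtain ⟨hFM, hMmax⟩ := hMm
  refine ⟨M, hMmax.prop.1, hFM, fun G hG hMG => ?_⟩
  exact subset_antisymm (hMmax.le_of_ge ⟨hG, hFM.trans hMG⟩ hMG) hMG

/-- A maximal proper filter is prime. -/
theorem max_filter_prime {L : Type*} [Order.Frame L] {M : Set L}
    (hM : IsProperFilter M)
    (hmax : ∀ G, IsProperFilter G → M ⊆ G → G = M) :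
    IsPrimeFilter M := by
  obtain ⟨htop, hbot, hup, hmeet⟩ := hM
  refine ⟨htop, hbot, hup, hmeet, fun a b hab => ?_⟩
  by_contra h
  push_neg at h
  obtain ⟨ha, hb⟩ := h
  -- extend by a, resp. b, to get witnesses d, e with d ⊓ a = ⊥, e ⊓ b = ⊥
  have key : ∀ c : L, c ∉ M → (∃ d ∈ M, d ⊓ c ≤ ⊥) ∨
      IsProperFilter {u | ∃ d ∈ M, d ⊓ c ≤ u} := by
    intro c hc
    by_cases hB : (⊥ : L) ∈ {u | ∃ d ∈ M, d ⊓ c ≤ u}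
    · exact Or.inl hB
    · refine Or.inr ⟨⟨⊤, htop, le_top⟩, hB, ?_, ?_⟩
      · rintro u v ⟨d, hd, hdu⟩ huv
        exact ⟨d, hd, hdu.trans huv⟩
      · rintro u v ⟨d, hd, hdu⟩ ⟨e, he, hev⟩
        exact ⟨d ⊓ e, hmeet d e hd he,
          le_inf ((inf_le_inf_right c inf_le_left).trans hdu)
            ((inf_le_inf_right c inf_le_right).trans hev)⟩
  have wit : ∀ c : L, c ∉ M → ∃ d ∈ M, d ⊓ c ≤ ⊥ := by
    intro c hc
    rcases key c hc with h | h
    · exact h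
    · exfalso
      have hsub : M ⊆ {u | ∃ d ∈ M, d ⊓ c ≤ u} := fun u hu => ⟨u, hu, inf_le_left⟩
      have := hmax _ h hsub
      apply hc
      rw [← this]
      exact ⟨⊤, htop, by simp⟩
  obtain ⟨d, hd, hda⟩ := wit a ha
  obtain ⟨e, he, heb⟩ := wit b hb
  apply hbot
  have hmem : (d ⊓ e) ⊓ (a ⊔ b) ∈ M := hmeet _ _ (hmeet d e hd he) hab
  have hle : (d ⊓ e) ⊓ (a ⊔ b) ≤ ⊥ := by
    rw [inf_sup_left]
    refine sup_le ?_ ?_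
    · exact le_trans (inf_le_inf_right a inf_le_left) hda
    · exact le_trans (inf_le_inf_right b inf_le_right) heb
  have : (d ⊓ e) ⊓ (a ⊔ b) = ⊥ := le_bot_iff.mp hle
  rwa [this] at hmem

/-- For a frame `L` with Priestley space `X` (the prime filters of `L`
ordered by inclusion) and a nucleus `j` on `L`: `j ⊥ = ⊥` (i.e. `j` is dense) iff
every maximal point of `X` belongs to `N_j = {x : j ⁻¹' x = x}` (i.e. `N_j` is cofinal). -/
theorem statement2 {L : Type*} [Order.Frame L] (j : L → L)
    (hj1 : ∀ a : L, a ≤ j a) (hj2 : ∀ a : L, j (j a) ≤ j a)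
    (hj3 : ∀ a b : L, j a ⊓ j b = j (a ⊓ b)) :
    j ⊥ = ⊥ ↔
      ∀ x : Set L, IsPrimeFilter x →
        (∀ z : Set L, IsPrimeFilter z → x ⊆ z → z = x) → j ⁻¹' x = x := by
  have jmono : ∀ a b : L, a ≤ b → j a ≤ j b := by
    intro a b hab
    have : j a ⊓ j b = j a := by rw [hj3, inf_eq_left.mpr hab]
    rw [← this]; exact inf_le_right
  constructor
  · intro hdense x hx hmax
    obtain ⟨htop, hbot, hup, hmeet, hprime⟩ := hx
    ext a
    simp only [Set.mem_preimage]
    constructor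
    · intro hja
      by_contra haM
      -- the filter generated by x and a is proper
      set F : Set L := {u | ∃ d ∈ x, d ⊓ a ≤ u} with hFdef
      have hFfil : IsProperFilter F := by
        refine ⟨⟨⊤, htop, le_top⟩, ?_, ?_, ?_⟩
        · rintro ⟨d, hd, hdb⟩
          have h1 : j d ⊓ j a ≤ ⊥ := by
            rw [hj3]
            calc j (d ⊓ a) ≤ j ⊥ := jmono _ _ (le_bot_iff.mp hdb ▸ le_rfl)
              _ = ⊥ := hdense
          have h2 : j d ⊓ j a ∈ x := hmeet _ _ (hup d (j d) hd (hj1 d)) hja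
          rw [le_bot_iff.mp h1] at h2
          exact hbot h2
        · rintro u v ⟨d, hd, hdu⟩ huv
          exact ⟨d, hd, hdu.trans huv⟩
        · rintro u v ⟨d, hd, hdu⟩ ⟨e, he, hev⟩
          exact ⟨d ⊓ e, hmeet d e hd he,
            le_inf ((inf_le_inf_right a inf_le_left).trans hdu)
              ((inf_le_inf_right a inf_le_right).trans hev)⟩
      obtain ⟨M, hMfil, hFM, hMmax⟩ := exists_max_filter hFfil
      have hMprime := max_filter_prime hMfil hMmax
      have hxM : x ⊆ M := fun u hu => hFM ⟨u, hu, inf_le_left⟩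
      have : M = x := hmax M hMprime hxM
      apply haM
      rw [← this]
      exact hFM ⟨⊤, htop, by simp⟩
    · intro ha
      exact hup a (j a) ha (hj1 a)
  · intro h
    by_contra hne
    -- the principal filter at j ⊥ is proper
    have hF : IsProperFilter {u | j ⊥ ≤ u} := by
      refine ⟨le_top, fun hb => hne (le_bot_iff.mp hb), ?_, ?_⟩
      · exact fun a b ha hab => ha.trans hab
      · exact fun a b ha hb => le_inf ha hb
    obtain ⟨M, hMfil, hFM, hMmax⟩ := exists_max_filter hF
    have hMprime := max_filter_prime hMfil hMmax
    have hMmax' : ∀ z : Set L, IsPrimeFilter z → M ⊆ z → z = M := by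
      intro z hz hMz
      exact hMmax z ⟨hz.1, hz.2.1, hz.2.2.1, hz.2.2.2.1⟩ hMz
    have hfix := h M hMprime hMmax'
    have : (⊥ : L) ∈ j ⁻¹' M := hFM (le_refl (j ⊥))
    rw [hfix] at this
    exact hMfil.2.1 this
end

section
/- Let X be a topological space that is sober, locally compact, and coherent (the intersection of any two compact saturated subsets of X is compact). Then X is Hausdorff if and only if X is T1. -/
open Topology Filter Set

/-- A saturated subset of a topological space: an intersection of open sets. -/
def IsSaturatedSet {X : Type*} [TopologicalSpace X] (K : Set X) : Prop :=
  ∃ 𝒰 : Set (Set X), (∀ U ∈ 𝒰, IsOpen U) ∧ K = ⋂₀ 𝒰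

/-- In a T1 space, every set is saturated. -/
lemma isSaturatedSet_of_t1 {X : Type*} [TopologicalSpace X] [T1Space X] (S : Set X) :
    IsSaturatedSet S := by
  refine ⟨(fun x => {x}ᶜ) '' Sᶜ, ?_, ?_⟩
  · rintro U ⟨x, -, rfl⟩
    exact isOpen_compl_singleton
  · ext y
    constructor
    · intro hy
      apply Set.mem_sInter.mpr
      rintro U ⟨x, hx, rfl⟩
      simp only [Set.mem_compl_iff, Set.mem_singleton_iff]
      rintro rfl
      exact hx hy
    · intro h
      by_contra hy
      have := Set.mem_sInter.mp h _ ⟨y, hy, rfl⟩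
      simp at this

/-- Hofmann–Mislove style lemma: in a quasi-sober space, a directed family of
nonempty compact saturated sets has nonempty intersection. -/
lemma nonempty_iInter_of_directed {X : Type*} [TopologicalSpace X] [QuasiSober X]
    {ι : Type*} [Nonempty ι] {K : ι → Set X} (hdir : ∀ i j, ∃ l, K l ⊆ K i ∩ K j)
    (hcomp : ∀ i, IsCompact (K i)) (hsat : ∀ i, IsSaturatedSet (K i))
    (hne : ∀ i, (K i).Nonempty) : (⋂ i, K i).Nonempty := by
  classical
  set S : Set (Set X) := {C | IsClosed C ∧ ∀ i, (C ∩ K i).Nonempty} with hS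
  have huniv : (Set.univ : Set X) ∈ S := ⟨isClosed_univ, fun i => by simpa using hne i⟩
  obtain ⟨m, -, hmS, hmin⟩ : ∃ m, m ⊆ Set.univ ∧ Minimal (· ∈ S) m := by
    apply zorn_superset_nonempty S ?_ _ huniv
    intro c hcS hc hcne
    refine ⟨⋂₀ c, ⟨isClosed_sInter fun C hC => (hcS hC).1, fun i => ?_⟩, fun s hs => Set.sInter_subset_of_mem hs⟩
    have : (K i ∩ ⋂ C : c, (C : Set X)).Nonempty := by
      apply (hcomp i).inter_iInter_nonempty _ (fun C => (hcS C.2).1)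
      intro u
      by_cases hu : u.Nonempty
      · have hdir' : Directed (fun A B : Set X => B ⊆ A) fun C : c => (C : Set X) := by
          intro a b
          rcases hc.total a.2 b.2 with h | h
          · exact ⟨a, subset_rfl, h⟩
          · exact ⟨b, h, subset_rfl⟩
        haveI : Nonempty c := ⟨hcne.some, hcne.some_mem⟩
        obtain ⟨C₀, hC₀⟩ := @Directed.finset_le (Set X) (fun A B => B ⊆ A)
          ⟨fun a b d h1 h2 => h2.trans h1⟩ c _ _ hdir' u
        obtain ⟨x, hx⟩ := (hcS C₀.2).2 i
        exact ⟨x, hx.2, Set.mem_iInter₂.mpr fun C hC => hC₀ C hC hx.1⟩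
      · rw [Finset.not_nonempty_iff_eq_empty] at hu
        subst hu
        simpa using hne i
    obtain ⟨x, hx1, hx2⟩ := this
    refine ⟨x, ?_, hx1⟩
    rw [Set.sInter_eq_iInter]
    exact hx2
  have hm_closed : IsClosed m := hmS.1
  have hm_meets : ∀ i, (m ∩ K i).Nonempty := hmS.2
  have hm_ne : m.Nonempty := (hm_meets (Classical.arbitrary ι)).mono Set.inter_subset_left
  -- m is irreducible
  have hirr : IsIrreducible m := by
    refine ⟨hm_ne, fun U V hU hV hmU hmV => ?_⟩
    by_contra hUV
    have hsub : m ⊆ Uᶜ ∪ Vᶜ := by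
      intro x hx
      by_contra hx'
      simp only [Set.mem_union, Set.mem_compl_iff, not_or, not_not] at hx'
      exact hUV ⟨x, hx, hx'.1, hx'.2⟩
    have h1 : m ∩ Uᶜ ∉ S := by
      intro h
      have := hmin h Set.inter_subset_left
      obtain ⟨x, hxm, hxU⟩ := hmU
      exact (this hxm).2 hxU
    have h2 : m ∩ Vᶜ ∉ S := by
      intro h
      have := hmin h Set.inter_subset_left
      obtain ⟨x, hxm, hxV⟩ := hmV
      exact (this hxm).2 hxV
    have hc1 : IsClosed (m ∩ Uᶜ) := hm_closed.inter (isClosed_compl_iff.mpr hU)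
    have hc2 : IsClosed (m ∩ Vᶜ) := hm_closed.inter (isClosed_compl_iff.mpr hV)
    simp only [hS, Set.mem_setOf_eq, not_and, not_forall] at h1 h2
    obtain ⟨i, hi⟩ := h1 hc1
    obtain ⟨j, hj⟩ := h2 hc2
    rw [Set.not_nonempty_iff_eq_empty] at hi hj
    obtain ⟨l, hl⟩ := hdir i j
    obtain ⟨x, hxm, hxl⟩ := hm_meets l
    rcases hsub hxm with hx | hx
    · exact Set.eq_empty_iff_forall_notMem.mp hi x ⟨⟨hxm, hx⟩, (hl hxl).1⟩
    · exact Set.eq_empty_iff_forall_notMem.mp hj x ⟨⟨hxm, hx⟩, (hl hxl).2⟩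
  obtain ⟨x, hx⟩ := QuasiSober.sober hirr hm_closed
  refine ⟨x, Set.mem_iInter.mpr fun i => ?_⟩
  obtain ⟨𝒰, h𝒰open, h𝒰⟩ := hsat i
  rw [h𝒰]
  intro U hU
  obtain ⟨y, hym, hyK⟩ := hm_meets i
  have hyU : y ∈ U := by rw [h𝒰] at hyK; exact hyK U hU
  have hycl : y ∈ closure {x} := hx ▸ hym
  obtain ⟨z, hz1, hz2⟩ := mem_closure_iff.mp hycl U (h𝒰open U hU) hyU
  rwa [Set.mem_singleton_iff.mp hz2] at hz1

/-- A sober, locally compact, coherent space (one in which the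
intersection of any two compact saturated sets is compact) is Hausdorff iff it is T1. -/
theorem statement4 {X : Type*} [TopologicalSpace X]
    [QuasiSober X] [T0Space X] [LocallyCompactSpace X]
    (hcoh : ∀ K M : Set X, IsCompact K → IsSaturatedSet K →
      IsCompact M → IsSaturatedSet M → IsCompact (K ∩ M)) :
    T2Space X ↔ T1Space X := by
  constructor
  · intro _; infer_instance
  · intro hT1
    -- In a T1 space every set is saturated, so intersections of compacts are compact.
    have hcoh' : ∀ K M : Set X, IsCompact K → IsCompact M → IsCompact (K ∩ M) :=
      fun K M hK hM => hcoh K M hK (isSaturatedSet_of_t1 K) hM (isSaturatedSet_of_t1 M)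
    -- Every compact set is closed.
    have hclosed : ∀ K : Set X, IsCompact K → IsClosed K := by
      intro K hK
      rw [← closure_subset_iff_isClosed]
      intro y hy
      set ι := {M : Set X // IsCompact M ∧ M ∈ 𝓝 y} with hι
      haveI : Nonempty ι := by
        obtain ⟨M, hM1, hM2⟩ := exists_compact_mem_nhds y
        exact ⟨⟨M, hM1, hM2⟩⟩
      set F : ι → Set X := fun i => i.1 ∩ K with hF
      have hdir : ∀ i j, ∃ l, F l ⊆ F i ∩ F j := by
        intro i j
        refine ⟨⟨i.1 ∩ j.1, hcoh' _ _ i.2.1 j.2.1, Filter.inter_mem i.2.2 j.2.2⟩, ?_⟩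
        rintro x ⟨⟨hxi, hxj⟩, hxK⟩
        exact ⟨⟨hxi, hxK⟩, hxj, hxK⟩
      have hcomp : ∀ i, IsCompact (F i) := fun i => hcoh' _ _ i.2.1 hK
      have hne : ∀ i, (F i).Nonempty := fun i =>
        mem_closure_iff_nhds.mp hy i.1 i.2.2
      obtain ⟨z, hz⟩ := nonempty_iInter_of_directed hdir hcomp
        (fun i => isSaturatedSet_of_t1 _) hne
      simp only [Set.mem_iInter] at hz
      -- z lies in every compact neighborhood of y, hence in every neighborhood of y
      have hzy : y ∈ closure ({z} : Set X) := by
        rw [mem_closure_iff]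
        intro U hU hyU
        obtain ⟨M, hM1, hM2, hM3⟩ := local_compact_nhds (hU.mem_nhds hyU)
        exact ⟨z, hM2 (hz ⟨M, hM3, hM1⟩).1, rfl⟩
      rw [closure_singleton, Set.mem_singleton_iff] at hzy
      exact hzy ▸ (hz (Classical.arbitrary ι)).2
    -- Then the space is regular, hence T3, hence T2.
    have hreg : RegularSpace X := by
      apply RegularSpace.of_exists_mem_nhds_isClosed_subset
      intro x s hs
      obtain ⟨M, hM1, hM2, hM3⟩ := local_compact_nhds hs
      exact ⟨M, hM1, hclosed M hM3, hM2⟩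
    haveI := hreg
    haveI : T3Space X := {}
    infer_instance
end

section
/- Let X be an algebraic L-space and N a nuclear subset of X. Then N is inductive if and only if for every clopen upset U of X one has j_N U = cl(⋃{j_N V : V ∈ ClopSUp(X), V ⊆ U}). -/
open Set Topology

variable {X : Type*} [TopologicalSpace X] [PartialOrder X]

/-- The downward closure `↓A` of a subset of a poset. -/
def dwC (A : Set X) : Set X := {x : X | ∃ a ∈ A, x ≤ a}

/-- The upward closure `↑A` of a subset of a poset. -/
def upC (A : Set X) : Set X := {x : X | ∃ a ∈ A, a ≤ x}

/-- The set of maximal points of a subset of a poset. -/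
def maxOf (A : Set X) : Set X := {x ∈ A | ∀ z ∈ A, x ≤ z → z = x}

/-- The set of minimal points of a subset of a poset. -/
def minOf (A : Set X) : Set X := {x ∈ A | ∀ z ∈ A, z ≤ x → z = x}

/-- A Priestley space: compact with the Priestley separation axiom. -/
def IsPriestley (X : Type*) [TopologicalSpace X] [PartialOrder X] : Prop :=
  CompactSpace X ∧
    ∀ x y : X, ¬x ≤ y → ∃ U : Set X, IsClopen U ∧ IsUpperSet U ∧ x ∈ U ∧ y ∉ U

/-- An L-space: a Priestley space where the closure of every open upset is an open upset. -/
def IsLSpace (X : Type*) [TopologicalSpace X] [PartialOrder X] : Prop :=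
  IsPriestley X ∧
    ∀ U : Set X, IsOpen U → IsUpperSet U → IsOpen (closure U) ∧ IsUpperSet (closure U)

/-- The set `Y` of localic points: those `y` with `↓y` clopen. -/
def localicPts (X : Type*) [TopologicalSpace X] [PartialOrder X] : Set X :=
  {y : X | IsClopen (dwC ({y} : Set X))}

/-- A Scott upset: a closed upset whose minimal points are localic. -/
def IsScottUp (F : Set X) : Prop :=
  IsClosed F ∧ IsUpperSet F ∧ minOf F ⊆ localicPts X

/-- The collection of clopen Scott upsets of `X`. -/
def ClopSUp (X : Type*) [TopologicalSpace X] [PartialOrder X] : Set (Set X) :=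
  {U : Set X | IsClopen U ∧ IsScottUp U}

/-- The core of a clopen upset: the union of the clopen Scott upsets inside it. -/
def coreC (U : Set X) : Set X := ⋃₀ {V : Set X | V ∈ ClopSUp X ∧ V ⊆ U}

/-- An algebraic L-space: the core of each clopen upset is dense in it. -/
def IsAlgebraicLSpace (X : Type*) [TopologicalSpace X] [PartialOrder X] : Prop :=
  IsLSpace X ∧ ∀ U : Set X, IsClopen U → IsUpperSet U → U ⊆ closure (coreC U)

/-- An arithmetic L-space: an algebraic L-space in which the intersection of any
two clopen Scott upsets is again a Scott upset. -/
def IsArithmeticLSpace (X : Type*) [TopologicalSpace X] [PartialOrder X] : Prop :=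
  IsAlgebraicLSpace X ∧
    ∀ U V : Set X, U ∈ ClopSUp X → V ∈ ClopSUp X → IsScottUp (U ∩ V)

/-- A nuclear subset of an L-space. -/
def IsNuclearSub (N : Set X) : Prop :=
  IsClosed N ∧ ∀ U : Set X, IsClopen U → IsClopen (dwC (U ∩ N))

/-- The nucleus `j_N` associated to a nuclear subset: `j_N U = X \ ↓(N \ U)`. -/
def jN (N U : Set X) : Set X := (dwC (N \ U))ᶜ

/-- A nuclear subset is inductive if `↑(F ∩ N)` is a Scott upset for every Scott upset `F`. -/
def IsInductiveNuclear (N : Set X) : Prop :=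
  ∀ F : Set X, IsScottUp F → IsScottUp (upC (F ∩ N))

/-- The pseudocomplement `V* = X \ ↓V`. -/
def starC (V : Set X) : Set X := (dwC V)ᶜ

/-- The `d`-nucleus on clopen upsets: `d U = cl ⋃ {V** : V ∈ ClopSUp X, V ⊆ U}`. -/
def dOp (U : Set X) : Set X :=
  closure (⋃₀ {W : Set X | ∃ V ∈ ClopSUp X, V ⊆ U ∧ W = starC (starC V)})

/-- The `d`-core: `core_d U = ⋃ {d V : V ∈ ClopSUp X, V ⊆ U}`. -/
def coreD (U : Set X) : Set X :=
  ⋃₀ {W : Set X | ∃ V ∈ ClopSUp X, V ⊆ U ∧ W = dOp V}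

/-- The topology on a subset `S ⊆ X` whose opens are (generated by) the traces of
clopen upsets of `X`. -/
def traceTop (S : Set X) : TopologicalSpace S :=
  TopologicalSpace.generateFrom
    {V : Set S | ∃ U : Set X, IsClopen U ∧ IsUpperSet U ∧ V = Subtype.val ⁻¹' U}

section AuxiliaryLemmas

lemma dwC_isLowerSet (A : Set X) : IsLowerSet (dwC A) :=
  fun _a b hba ⟨c, hc, hac⟩ => ⟨c, hc, hba.trans hac⟩

lemma upC_isUpperSet (A : Set X) : IsUpperSet (upC A) :=
  fun _a b hab ⟨c, hc, hca⟩ => ⟨c, hc, hca.trans hab⟩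

lemma priestley_t2 (hP : IsPriestley X) : T2Space X := by
  refine ⟨fun x y hxy => ?_⟩
  by_cases h : x ≤ y
  · have h' : ¬ y ≤ x := fun h2 => hxy (le_antisymm h h2)
    obtain ⟨U, hU, _, hyU, hxU⟩ := hP.2 y x h'
    exact ⟨Uᶜ, U, hU.compl.isOpen, hU.isOpen, hxU, hyU, disjoint_compl_left⟩
  · obtain ⟨U, hU, _, hxU, hyU⟩ := hP.2 x y h
    exact ⟨U, Uᶜ, hU.isOpen, hU.compl.isOpen, hxU, hyU, disjoint_compl_right⟩

lemma dwC_singleton_isClosed (hP : IsPriestley X) (x : X) :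
    IsClosed (dwC ({x} : Set X)) := by
  rw [← isOpen_compl_iff, isOpen_iff_forall_mem_open]
  intro z hz
  have hzx : ¬ z ≤ x := fun h => hz ⟨x, rfl, h⟩
  obtain ⟨U, hU, hUup, hzU, hxU⟩ := hP.2 z x hzx
  refine ⟨U, fun w hw hwmem => ?_, hU.isOpen, hzU⟩
  obtain ⟨a, ha, hwa⟩ := hwmem
  rw [Set.mem_singleton_iff] at ha; subst ha
  exact hxU (hUup hwa hw)

lemma sep_upset (hP : IsPriestley X) {K : Set X} (hK : IsCompact K) {z : X}
    (hz : ∀ k ∈ K, ¬ k ≤ z) :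
    ∃ V : Set X, IsClopen V ∧ IsUpperSet V ∧ K ⊆ V ∧ z ∉ V := by
  choose U hU hUup hmem hznot using fun k : K => hP.2 k.1 z (hz k.1 k.2)
  obtain ⟨t, ht⟩ := hK.elim_finite_subcover U (fun k => (hU k).isOpen)
    (fun k hk => Set.mem_iUnion.2 ⟨⟨k, hk⟩, hmem _⟩)
  refine ⟨⋃ k ∈ t, U k, t.finite_toSet.isClopen_biUnion (fun k _ => hU k),
    isUpperSet_iUnion fun k => isUpperSet_iUnion fun _ => hUup k, ht, ?_⟩
  simp only [Set.mem_iUnion]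
  rintro ⟨k, _, hkz⟩
  exact hznot k hkz

lemma upC_isClosed (hP : IsPriestley X) {K : Set X} (hK : IsClosed K) :
    IsClosed (upC K) := by
  have : CompactSpace X := hP.1
  rw [← isOpen_compl_iff, isOpen_iff_forall_mem_open]
  intro z hz
  have hz' : ∀ k ∈ K, ¬ k ≤ z := fun k hk hkz => hz ⟨k, hk, hkz⟩
  obtain ⟨V, hV, hVup, hKV, hzV⟩ := sep_upset hP hK.isCompact hz'
  refine ⟨Vᶜ, fun w hw hwmem => ?_, hV.compl.isOpen, hzV⟩
  obtain ⟨k, hk, hkw⟩ := hwmem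
  exact hw (hVup hkw (hKV hk))

lemma exists_minOf_le (hP : IsPriestley X) {F : Set X} (hF : IsClosed F) {x : X}
    (hx : x ∈ F) : ∃ m, m ∈ minOf F ∧ m ≤ x := by
  have : CompactSpace X := hP.1
  have H := zorn_le_nonempty₀ (α := Xᵒᵈ)
      {z : Xᵒᵈ | OrderDual.ofDual z ∈ F ∧ OrderDual.ofDual z ≤ x}
      ?_ (OrderDual.toDual x) ⟨hx, le_rfl⟩
  · obtain ⟨m, hxm, hms, hmax⟩ := H
    refine ⟨OrderDual.ofDual m, ⟨hms.1, fun z hzF hzm => ?_⟩, hms.2⟩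
    have h2 : OrderDual.ofDual m ≤ z :=
      hmax (y := OrderDual.toDual z) ⟨hzF, hzm.trans hms.2⟩ hzm
    exact le_antisymm hzm h2
  · intro c hcs hc y hy
    haveI hne : Nonempty c := ⟨⟨y, hy⟩⟩
    set t : c → Set X := fun a => F ∩ dwC ({OrderDual.ofDual a.1} : Set X) with ht
    have htcl : ∀ a : c, IsClosed (t a) :=
      fun a => hF.inter (dwC_singleton_isClosed hP _)
    have htne : ∀ a : c, (t a).Nonempty :=
      fun a => ⟨OrderDual.ofDual a.1, (hcs a.2).1, ⟨OrderDual.ofDual a.1, rfl, le_rfl⟩⟩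
    have htdir : Directed (· ⊇ ·) t := by
      intro a b
      rcases hc.total a.2 b.2 with h | h
      · -- a ≤ b in dual, i.e. ofDual b ≤ ofDual a in X
        refine ⟨b, fun w hw => ⟨hw.1, ?_⟩, subset_rfl⟩
        obtain ⟨e, he, hwe⟩ := hw.2
        rw [Set.mem_singleton_iff] at he; subst he
        exact ⟨OrderDual.ofDual a.1, rfl, hwe.trans h⟩
      · refine ⟨a, subset_rfl, fun w hw => ⟨hw.1, ?_⟩⟩
        obtain ⟨e, he, hwe⟩ := hw.2
        rw [Set.mem_singleton_iff] at he; subst he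
        exact ⟨OrderDual.ofDual b.1, rfl, hwe.trans h⟩
    obtain ⟨b, hb⟩ := IsCompact.nonempty_iInter_of_directed_nonempty_isCompact_isClosed
      t htdir htne (fun a => (htcl a).isCompact) htcl
    rw [Set.mem_iInter] at hb
    have hble : ∀ a : c, b ≤ OrderDual.ofDual a.1 := by
      intro a
      obtain ⟨e, he, hbe⟩ := (hb a).2
      rw [Set.mem_singleton_iff] at he; subst he
      exact hbe
    exact ⟨OrderDual.toDual b, ⟨(hb ⟨y, hy⟩).1, (hble ⟨y, hy⟩).trans (hcs hy).2⟩,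
      fun z hz => hble ⟨z, hz⟩⟩

lemma clopSUp_biUnion {ι : Type*} (t : Finset ι) (f : ι → Set X)
    (h : ∀ i ∈ t, f i ∈ ClopSUp X) : (⋃ i ∈ t, f i) ∈ ClopSUp X := by
  have hclopen : IsClopen (⋃ i ∈ t, f i) :=
    t.finite_toSet.isClopen_biUnion fun i hi => (h i hi).1
  refine ⟨hclopen, hclopen.isClosed,
    isUpperSet_iUnion fun i => isUpperSet_iUnion fun hi => (h i hi).2.2.1, ?_⟩
  intro m hm
  obtain ⟨hm1, hm2⟩ := hm
  simp only [Set.mem_iUnion] at hm1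
  obtain ⟨i, hi, hmi⟩ := hm1
  exact (h i hi).2.2.2 ⟨hmi, fun z hz hzm => hm2 z (Set.mem_biUnion hi hz) hzm⟩

lemma localic_mem_clopSUp (hX : IsAlgebraicLSpace X) {y : X} (hy : y ∈ localicPts X)
    {U : Set X} (hU : IsClopen U) (hUup : IsUpperSet U) (hyU : y ∈ U) :
    ∃ V ∈ ClopSUp X, y ∈ V ∧ V ⊆ U := by
  have hycl := hX.2 U hU hUup hyU
  have hdw : IsClopen (dwC ({y} : Set X)) := hy
  rw [mem_closure_iff] at hycl
  obtain ⟨z, hz1, hz2⟩ := hycl _ hdw.isOpen ⟨y, rfl, le_rfl⟩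
  obtain ⟨V, ⟨hV, hVU⟩, hzV⟩ := hz2
  obtain ⟨a, ha, hza⟩ := hz1
  rw [Set.mem_singleton_iff] at ha; subst ha
  exact ⟨V, hV, hV.2.2.1 hza hzV, hVU⟩

lemma scottUp_subset_clopSUp (hX : IsAlgebraicLSpace X) {F U : Set X} (hF : IsScottUp F)
    (hU : IsClopen U) (hUup : IsUpperSet U) (hFU : F ⊆ U) :
    ∃ V ∈ ClopSUp X, F ⊆ V ∧ V ⊆ U := by
  have hP : IsPriestley X := hX.1.1
  have : CompactSpace X := hP.1
  have hsel : ∀ p : F, ∃ V, V ∈ ClopSUp X ∧ (p : X) ∈ V ∧ V ⊆ U := by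
    intro p
    obtain ⟨m, hm, hmp⟩ := exists_minOf_le hP hF.1 p.2
    have hmY : m ∈ localicPts X := hF.2.2 hm
    obtain ⟨V, hV, hmV, hVU⟩ := localic_mem_clopSUp hX hmY hU hUup (hFU hm.1)
    exact ⟨V, hV, hV.2.2.1 hmp hmV, hVU⟩
  choose V hV hmem hVU using hsel
  obtain ⟨t, ht⟩ := (hF.1.isCompact).elim_finite_subcover V (fun p => (hV p).1.isOpen)
    (fun p hp => Set.mem_iUnion.2 ⟨⟨p, hp⟩, hmem _⟩)
  exact ⟨⋃ p ∈ t, V p, clopSUp_biUnion t V (fun p _ => hV p), ht,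
    Set.iUnion₂_subset fun p _ => hVU p⟩

lemma jN_isClopen {N : Set X} (hN : IsNuclearSub N) {U : Set X} (hU : IsClopen U) :
    IsClopen (jN N U) := by
  have h : N \ U = Uᶜ ∩ N := by ext w; simp [Set.mem_diff, and_comm]
  rw [jN, h]
  exact (hN.2 _ hU.compl).compl

lemma jN_isUpperSet (N U : Set X) : IsUpperSet (jN N U) := (dwC_isLowerSet _).compl

lemma mem_jN {N U : Set X} {y : X} : y ∈ jN N U ↔ ∀ n ∈ N, y ≤ n → n ∈ U := by
  constructor
  · intro h n hn hyn
    by_contra hnU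
    exact h ⟨n, ⟨hn, hnU⟩, hyn⟩
  · rintro h ⟨n, ⟨hn, hnU⟩, hyn⟩
    exact hnU (h n hn hyn)

lemma jN_mono {N V U : Set X} (h : V ⊆ U) : jN N V ⊆ jN N U := by
  intro y hy
  rw [mem_jN] at *
  exact fun n hn hyn => h (hy n hn hyn)

end AuxiliaryLemmas


/-- Let `X` be an algebraic L-space and `N` a nuclear subset of `X`.
Then `N` is inductive iff for every clopen upset `U` of `X`,
`j_N U = cl (⋃ {j_N V : V ∈ ClopSUp X, V ⊆ U})`. -/
theorem statement5 (hX : IsAlgebraicLSpace X) (N : Set X) (hN : IsNuclearSub N) :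
    IsInductiveNuclear N ↔
      ∀ U : Set X, IsClopen U → IsUpperSet U →
        jN N U = closure (⋃₀ {W : Set X | ∃ V ∈ ClopSUp X, V ⊆ U ∧ W = jN N V}) := by
  have hP : IsPriestley X := hX.1.1
  have hcs : CompactSpace X := hP.1
  have hT2 : T2Space X := priestley_t2 hP
  constructor
  · intro hInd U hU hUup
    apply Set.Subset.antisymm
    · have h1 : jN N U ⊆ closure (coreC (jN N U)) :=
        hX.2 _ (jN_isClopen hN hU) (jN_isUpperSet N U)
      refine h1.trans (closure_mono ?_)
      rintro x ⟨W, ⟨hW, hWj⟩, hxW⟩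
      have hWN : W ∩ N ⊆ U := by
        rintro w ⟨hwW, hwN⟩
        exact mem_jN.1 (hWj hwW) w hwN le_rfl
      have hScott : IsScottUp (upC (W ∩ N)) := hInd W hW.2
      have hsubU : upC (W ∩ N) ⊆ U := by
        rintro z ⟨a, haWN, haz⟩
        exact hUup haz (hWN haWN)
      obtain ⟨V, hV, hFV, hVU⟩ := scottUp_subset_clopSUp hX hScott hU hUup hsubU
      refine Set.mem_sUnion.2 ⟨jN N V, ⟨V, hV, hVU, rfl⟩, ?_⟩
      rw [mem_jN]
      intro n hn hxn
      exact hFV ⟨n, ⟨hW.2.2.1 hxn hxW, hn⟩, le_rfl⟩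
    · refine closure_minimal ?_ (jN_isClopen hN hU).isClosed
      rintro z ⟨W, ⟨V, hV, hVU, rfl⟩, hzW⟩
      exact jN_mono hVU hzW
  · intro hstar F hF
    refine ⟨upC_isClosed hP (hF.1.inter hN.1), upC_isUpperSet _, ?_⟩
    intro m hm
    have hmFN : m ∈ F ∩ N := by
      obtain ⟨p, hpFN, hpm⟩ := hm.1
      have hpU : p ∈ upC (F ∩ N) := ⟨p, hpFN, le_rfl⟩
      rw [hm.2 p hpU hpm] at hpFN
      exact hpFN
    obtain ⟨m₀, hm₀, hm₀m⟩ := exists_minOf_le hP hF.1 hmFN.1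
    have hm₀Y : m₀ ∈ localicPts X := hF.2.2 hm₀
    by_contra hmY
    set A : Set X := (dwC ({m} : Set X))ᶜ with hA
    have hAopen : IsOpen A := (dwC_singleton_isClosed hP m).isOpen_compl
    have hAup : IsUpperSet A := (dwC_isLowerSet _).compl
    obtain ⟨hWopen, hWup⟩ := hX.1.2 A hAopen hAup
    set W : Set X := closure A with hWdef
    have hWclopen : IsClopen W := ⟨isClosed_closure, hWopen⟩
    have hmW : m ∈ W := by
      by_contra hmW
      apply hmY
      have h2 : W = A := Set.Subset.antisymm (by
        intro w hw
        by_contra hwA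
        have hwdm : w ∈ dwC ({m} : Set X) := by
          by_contra hcon
          exact hwA hcon
        obtain ⟨a, ha, hwa⟩ := hwdm
        rw [Set.mem_singleton_iff] at ha; subst ha
        exact hmW (hWup hwa hw)) subset_closure
      have h3 : dwC ({m} : Set X) = Wᶜ := by rw [h2, hA, compl_compl]
      show IsClopen (dwC ({m} : Set X))
      rw [h3]
      exact hWclopen.compl
    have hLoc : ∀ w, w ∈ localicPts X → w ≤ m → w ∉ W := by
      intro w hw hwm hwW
      have hwclop : IsClopen (dwC ({w} : Set X)) := hw
      rw [hWdef, mem_closure_iff] at hwW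
      obtain ⟨z, hz1, hz2⟩ := hwW _ hwclop.isOpen ⟨w, rfl, le_rfl⟩
      obtain ⟨a, ha, hza⟩ := hz1
      rw [Set.mem_singleton_iff] at ha; subst ha
      exact hz2 ⟨m, rfl, hza.trans hwm⟩
    set S₀ : Set X := upC ({m₀} : Set X) ∩ N with hS₀
    have hS₀closed : IsClosed S₀ := (upC_isClosed hP isClosed_singleton).inter hN.1
    have hmS₀ : m ∈ S₀ := ⟨⟨m₀, rfl, hm₀m⟩, hmFN.2⟩
    have hDiamond : ∀ U' : Set X, IsClopen U' → IsUpperSet U' → S₀ ⊆ U' →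
        ∃ V ∈ ClopSUp X, S₀ ⊆ V ∧ V ⊆ U' := by
      intro U' hU' hU'up hSU'
      have hcore : S₀ ⊆ coreC U' := by
        intro n hnS
        by_contra hncore
        have hm₀n : m₀ ≤ n := by
          obtain ⟨⟨b, hb, hbn⟩, _⟩ := hnS
          rw [Set.mem_singleton_iff] at hb; subst hb
          exact hbn
        have hm₀j : m₀ ∈ jN N U' := by
          rw [mem_jN]
          intro k hk hm₀k
          exact hSU' ⟨⟨m₀, rfl, hm₀k⟩, hk⟩
        rw [hstar U' hU' hU'up, mem_closure_iff] at hm₀j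
        have hm₀clop : IsClopen (dwC ({m₀} : Set X)) := hm₀Y
        obtain ⟨z, hz1, hz2⟩ := hm₀j _ hm₀clop.isOpen ⟨m₀, rfl, le_rfl⟩
        obtain ⟨a, ha, hza⟩ := hz1
        rw [Set.mem_singleton_iff] at ha; subst ha
        obtain ⟨Wv, ⟨V, hV, hVU', rfl⟩, hzV⟩ := hz2
        have hnV : n ∉ V := fun hnV => hncore ⟨V, ⟨hV, hVU'⟩, hnV⟩
        exact hnV (mem_jN.1 hzV n hnS.2 (hza.trans hm₀n))
      have hcover : S₀ ⊆ ⋃ V : {V : Set X // V ∈ ClopSUp X ∧ V ⊆ U'}, V.1 := by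
        intro n hn
        obtain ⟨V, ⟨hV, hVU⟩, hnV⟩ := hcore hn
        exact Set.mem_iUnion.2 ⟨⟨V, hV, hVU⟩, hnV⟩
      obtain ⟨t, ht⟩ := hS₀closed.isCompact.elim_finite_subcover _
        (fun V : {V : Set X // V ∈ ClopSUp X ∧ V ⊆ U'} => V.2.1.1.isOpen) hcover
      exact ⟨⋃ V ∈ t, V.1, clopSUp_biUnion t _ (fun V _ => V.2.1), ht,
        Set.iUnion₂_subset fun V _ => V.2.2⟩
    haveI : Nonempty {U' : Set X // IsClopen U' ∧ IsUpperSet U' ∧ S₀ ⊆ U'} :=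
      ⟨⟨Set.univ, isClopen_univ, isUpperSet_univ, Set.subset_univ _⟩⟩
    set E : {U' : Set X // IsClopen U' ∧ IsUpperSet U' ∧ S₀ ⊆ U'} → Set X :=
      fun U' => dwC ({m} : Set X) ∩ Wᶜ ∩ U'.1 with hE
    have hEclosed : ∀ U', IsClosed (E U') := fun U' =>
      (((dwC_singleton_isClosed hP m).inter hWclopen.compl.isClosed)).inter U'.2.1.isClosed
    have hEne : ∀ U', (E U').Nonempty := by
      intro U'
      obtain ⟨V, hV, hSV, hVU'⟩ := hDiamond U'.1 U'.2.1 U'.2.2.1 U'.2.2.2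
      have hmV : m ∈ V := hSV hmS₀
      obtain ⟨w, hw, hwm⟩ := exists_minOf_le hP hV.2.1 hmV
      have hwY : w ∈ localicPts X := hV.2.2.2 hw
      exact ⟨w, ⟨⟨m, rfl, hwm⟩, hLoc w hwY hwm⟩, hVU' hw.1⟩
    have hEdir : Directed (· ⊇ ·) E := by
      intro a b
      exact ⟨⟨a.1 ∩ b.1, a.2.1.inter b.2.1, a.2.2.1.inter b.2.2.1,
        Set.subset_inter a.2.2.2 b.2.2.2⟩, fun z hz => ⟨hz.1, hz.2.1⟩,
        fun z hz => ⟨hz.1, hz.2.2⟩⟩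
    obtain ⟨w, hw⟩ := IsCompact.nonempty_iInter_of_directed_nonempty_isCompact_isClosed
      E hEdir hEne (fun U' => (hEclosed U').isCompact) hEclosed
    rw [Set.mem_iInter] at hw
    have hwbase := hw ⟨Set.univ, isClopen_univ, isUpperSet_univ, Set.subset_univ _⟩
    have hwm : w ≤ m := by
      obtain ⟨a, ha, hwa⟩ := hwbase.1.1
      rw [Set.mem_singleton_iff] at ha; subst ha
      exact hwa
    have hwW : w ∉ W := hwbase.1.2
    have hwS : w ∈ upC S₀ := by
      by_contra hwS
      have hzk : ∀ k ∈ S₀, ¬ k ≤ w := fun k hk hkw => hwS ⟨k, hk, hkw⟩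
      obtain ⟨V₀, hV₀, hV₀up, hSV₀, hwV₀⟩ := sep_upset hP hS₀closed.isCompact hzk
      exact hwV₀ (hw ⟨V₀, hV₀, hV₀up, hSV₀⟩).2
    obtain ⟨s, hsS, hsw⟩ := hwS
    have hm₀s : m₀ ≤ s := by
      obtain ⟨⟨b, hb, hbs⟩, _⟩ := hsS
      rw [Set.mem_singleton_iff] at hb; subst hb
      exact hbs
    have hsF : s ∈ F := hF.2.1 hm₀s hm₀.1
    have hwG : w ∈ upC (F ∩ N) := ⟨s, ⟨hsF, hsS.2⟩, hsw⟩
    have hwm' : w = m := hm.2 w hwG hwm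
    rw [hwm'] at hwW
    exact hwW hmW
end

section
/- Let X be an algebraic L-space and F a Scott upset of X. Then F = ⋂{U ∈ ClopSUp(X) : F ⊆ U}; that is, every Scott upset is the intersection of the clopen Scott upsets containing it. -/
open Set Topology

variable {X : Type*} [TopologicalSpace X] [PartialOrder X]

lemma isClosed_le_pt
    (hpri : ∀ x y : X, ¬x ≤ y → ∃ U : Set X, IsClopen U ∧ IsUpperSet U ∧ x ∈ U ∧ y ∉ U)
    (c : X) : IsClosed {x : X | x ≤ c} := by
  rw [← isOpen_compl_iff, isOpen_iff_mem_nhds]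
  intro x hx
  obtain ⟨U, hUc, hUu, hxU, hcU⟩ := hpri x c hx
  refine Filter.mem_of_superset (hUc.2.mem_nhds hxU) ?_
  intro z hz hzc
  exact hcU (hUu hzc hz)

lemma exists_min_le (hX : IsPriestley X) {F : Set X} (hFc : IsClosed F) {f : X} (hf : f ∈ F) :
    ∃ y ∈ minOf F, y ≤ f := by
  haveI : CompactSpace X := hX.1
  set s : Set X := {z | z ∈ F ∧ z ≤ f} with hs
  have hzorn := zorn_le₀ (α := Xᵒᵈ) s ?_
  · obtain ⟨m, hm⟩ := hzorn
    refine ⟨m, ⟨hm.1.1, ?_⟩, hm.1.2⟩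
    intro z hz hzm
    exact le_antisymm hzm (hm.2 ⟨hz, hzm.trans hm.1.2⟩ hzm)
  · intro c hcs hc
    rcases c.eq_empty_or_nonempty with rfl | ⟨y, hy⟩
    · exact ⟨f, ⟨hf, le_rfl⟩, fun z hz => absurd hz (notMem_empty z)⟩
    · haveI : Nonempty c := ⟨⟨y, hy⟩⟩
      have hne : (⋂ z : c, ({x : X | x ≤ OrderDual.ofDual z.1} ∩ F)).Nonempty := by
        apply IsCompact.nonempty_iInter_of_directed_nonempty_isCompact_isClosed
        · rintro ⟨a, ha⟩ ⟨b, hb⟩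
          rcases eq_or_ne a b with rfl | hab
          · exact ⟨⟨a, ha⟩, le_refl _, le_refl _⟩
          rcases hc ha hb hab with h | h
          · exact ⟨⟨b, hb⟩, fun x hx => ⟨hx.1.trans h, hx.2⟩, le_refl _⟩
          · exact ⟨⟨a, ha⟩, le_refl _, fun x hx => ⟨hx.1.trans h, hx.2⟩⟩
        · rintro ⟨a, ha⟩
          exact ⟨a, le_refl a, (hcs ha).1⟩
        · rintro ⟨a, ha⟩
          exact ((isClosed_le_pt hX.2 a).inter hFc).isCompact
        · rintro ⟨a, ha⟩
          exact (isClosed_le_pt hX.2 a).inter hFc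
      obtain ⟨b, hb⟩ := hne
      simp only [mem_iInter, mem_inter_iff] at hb
      refine ⟨b, ⟨(hb ⟨y, hy⟩).2, ((hb ⟨y, hy⟩).1).trans (hcs hy).2⟩, ?_⟩
      intro z hz
      exact (hb ⟨z, hz⟩).1

lemma exists_clopen_upset_sep (hX : IsPriestley X) {F : Set X} (hFc : IsClosed F)
    (hFu : IsUpperSet F) {x : X} (hx : x ∉ F) :
    ∃ U : Set X, IsClopen U ∧ IsUpperSet U ∧ F ⊆ U ∧ x ∉ U := by
  haveI : CompactSpace X := hX.1
  have hsep : ∀ y : F, ∃ U : Set X, IsClopen U ∧ IsUpperSet U ∧ (y : X) ∈ U ∧ x ∉ U := by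
    rintro ⟨y, hy⟩
    exact hX.2 y x (fun h => hx (hFu h hy))
  choose Uy hUyc hUyu hUyy hUyx using hsep
  obtain ⟨t, ht⟩ := hFc.isCompact.elim_finite_subcover Uy
    (fun y => (hUyc y).2) (fun y hy => mem_iUnion.mpr ⟨⟨y, hy⟩, hUyy ⟨y, hy⟩⟩)
  refine ⟨⋃ y ∈ t, Uy y, ?_, ?_, ht, ?_⟩
  · exact t.finite_toSet.isClopen_biUnion (fun y _ => hUyc y)
  · exact isUpperSet_iUnion (fun y => isUpperSet_iUnion (fun _ => hUyu y))
  · simp only [mem_iUnion]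
    rintro ⟨y, -, hmem⟩
    exact hUyx y hmem

lemma sUnion_clopSUp {T : Set (Set X)} (hTfin : T.Finite) (hT : ∀ V ∈ T, V ∈ ClopSUp X) :
    ⋃₀ T ∈ ClopSUp X := by
  have hclopen : IsClopen (⋃₀ T) := by
    rw [sUnion_eq_biUnion]
    exact hTfin.isClopen_biUnion (fun V hV => (hT V hV).1)
  refine ⟨hclopen, ?_, ?_, ?_⟩
  · exact hclopen.1
  · intro a b hab ha
    obtain ⟨V, hVT, haV⟩ := ha
    exact ⟨V, hVT, (hT V hVT).2.2.1 hab haV⟩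
  · rintro z ⟨⟨V, hVT, hzV⟩, hzmin⟩
    refine (hT V hVT).2.2.2 ⟨hzV, ?_⟩
    intro w hwV hwz
    exact hzmin w ⟨V, hVT, hwV⟩ hwz

/-- In an algebraic L-space, every Scott upset `F` is the intersection
of the clopen Scott upsets containing it. -/
theorem statement7 (hX : IsAlgebraicLSpace X) (F : Set X) (hF : IsScottUp F) :
    F = ⋂₀ {U : Set X | U ∈ ClopSUp X ∧ F ⊆ U} := by
  obtain ⟨hL, halg⟩ := hX
  obtain ⟨hpri, _⟩ := hL
  haveI : CompactSpace X := hpri.1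
  obtain ⟨hFc, hFu, hFloc⟩ := hF
  apply Subset.antisymm
  · intro f hf T hT
    exact hT.2 hf
  · intro x hx
    by_contra hxF
    -- clopen upset U ⊇ F with x ∉ U
    obtain ⟨U, hUc, hUu, hFU, hxU⟩ := exists_clopen_upset_sep hpri hFc hFu hxF
    -- each point of F lies in a clopen Scott upset contained in U
    have hkey : ∀ f : F, ∃ V : Set X, V ∈ ClopSUp X ∧ V ⊆ U ∧ (f : X) ∈ V := by
      rintro ⟨f, hf⟩
      obtain ⟨y, hymin, hyf⟩ := exists_min_le hpri hFc hf
      have hyloc : IsClopen (dwC ({y} : Set X)) := hFloc hymin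
      have hyU : y ∈ closure (coreC U) := halg U hUc hUu (hFU hymin.1)
      have hmeet : (dwC ({y} : Set X) ∩ coreC U).Nonempty := by
        rw [mem_closure_iff] at hyU
        exact hyU _ hyloc.2 ⟨y, mem_singleton y, le_rfl⟩
      obtain ⟨v, ⟨a, ha, hva⟩, V, ⟨hVc, hVU⟩, hvV⟩ := hmeet
      rw [mem_singleton_iff] at ha
      subst ha
      exact ⟨V, hVc, hVU, hVc.2.2.1 (hva.trans hyf) hvV⟩
    choose V hVc hVU hfV using hkey
    obtain ⟨t, ht⟩ := hFc.isCompact.elim_finite_subcover V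
      (fun f => (hVc f).1.2) (fun f hf => mem_iUnion.mpr ⟨⟨f, hf⟩, hfV ⟨f, hf⟩⟩)
    set T : Set (Set X) := (fun f => V f) '' (t : Set F) with hT
    have hTfin : T.Finite := (t : Set F).toFinite.image _
    have hTsub : ⋃₀ T ∈ ClopSUp X := by
      apply sUnion_clopSUp hTfin
      rintro W ⟨f, -, rfl⟩
      exact hVc f
    have hFT : F ⊆ ⋃₀ T := by
      intro f hf
      obtain ⟨g, hgt, hgmem⟩ := mem_iUnion₂.mp (ht hf)
      exact mem_sUnion.mpr ⟨V g, ⟨g, Finset.mem_coe.mpr hgt, rfl⟩, hgmem⟩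
    have hxT : x ∈ ⋃₀ T := mem_sInter.mp hx (⋃₀ T) ⟨hTsub, hFT⟩
    obtain ⟨W, ⟨f, -, rfl⟩, hxW⟩ := hxT
    exact hxU (hVU f hxW)
end

section
/- Let X be an arithmetic L-space and y ∈ Y a localic point. The following are equivalent: (1) y ∈ Y_d; (2) for every clopen upset U of X, y ∈ core_d U implies y ∈ U; (3) for every V ∈ ClopSUp(X), max ↑y ⊆ V implies y ∈ V; (4) {y} = max(↓x ∩ Y) for some x ∈ max X. -/
open Set Topology

variable {X : Type*} [TopologicalSpace X] [PartialOrder X]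

set_option linter.unusedSectionVars false

section StatementEightHelpers

lemma mem_dwC_singleton {a x : X} : x ∈ dwC ({a} : Set X) ↔ x ≤ a := by
  simp [dwC]

lemma mem_upC_singleton {a x : X} : x ∈ upC ({a} : Set X) ↔ a ≤ x := by
  simp [upC]

lemma isClosed_upC_singleton (hP : IsPriestley X) (a : X) :
    IsClosed (upC ({a} : Set X)) := by
  rw [← isOpen_compl_iff, isOpen_iff_forall_mem_open]
  intro z hz
  have hnle : ¬ a ≤ z := fun h => hz (mem_upC_singleton.mpr h)
  obtain ⟨U, hUc, hUu, haU, hzU⟩ := hP.2 a z hnle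
  refine ⟨Uᶜ, ?_, hUc.compl.isOpen, hzU⟩
  intro w hw hwmem
  exact hw (hUu (mem_upC_singleton.mp hwmem) haU)

lemma isClosed_dwC_singleton (hP : IsPriestley X) (a : X) :
    IsClosed (dwC ({a} : Set X)) := by
  rw [← isOpen_compl_iff, isOpen_iff_forall_mem_open]
  intro z hz
  have hnle : ¬ z ≤ a := fun h => hz (mem_dwC_singleton.mpr h)
  obtain ⟨U, hUc, hUu, hzU, haU⟩ := hP.2 z a hnle
  refine ⟨U, ?_, hUc.isOpen, hzU⟩
  intro w hw hwmem
  exact haU (hUu (mem_dwC_singleton.mp hwmem) hw)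

/-- Every point lies below a maximal point. -/
lemma exists_max_above (hP : IsPriestley X) (a : X) :
    ∃ m, a ≤ m ∧ ∀ z, m ≤ z → z = m := by
  haveI : CompactSpace X := hP.1
  classical
  have ih : ∀ c ⊆ upC ({a} : Set X), IsChain (· ≤ ·) c → ∀ y₀ ∈ c,
      ∃ ub ∈ upC ({a} : Set X), ∀ z ∈ c, z ≤ ub := by
    intro c hcs hchain y₀ hy₀
    have hne : (⋂ i : c, upC ({(i : X)} : Set X)).Nonempty := by
      by_contra hemp
      obtain ⟨t, ht⟩ := IsCompact.elim_finite_subfamily_closed isCompact_univ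
        (fun i : c => upC ({(i : X)} : Set X))
        (fun i => isClosed_upC_singleton hP _)
        (by rw [univ_inter]; exact not_nonempty_iff_eq_empty.mp hemp)
      have key : ∀ t : Finset c, ∃ w ∈ c, ∀ i ∈ t, (i : X) ≤ w := by
        classical
        intro t
        induction t using Finset.induction_on with
        | empty => exact ⟨y₀, hy₀, by simp⟩
        | @insert i s his ih =>
          obtain ⟨w, hwC, hw⟩ := ih
          rcases hchain.total i.2 hwC with hle | hle
          · exact ⟨w, hwC, fun j hj => by
              rcases Finset.mem_insert.mp hj with rfl | hj
              · exact hle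
              · exact hw j hj⟩
          · exact ⟨(i : X), i.2, fun j hj => by
              rcases Finset.mem_insert.mp hj with rfl | hj
              · exact le_rfl
              · exact (hw j hj).trans hle⟩
      obtain ⟨w, hwC, hw⟩ := key t
      have hwmem : w ∈ univ ∩ ⋂ i ∈ t, upC ({(i : X)} : Set X) :=
        ⟨mem_univ w, mem_iInter₂.mpr fun i hi => mem_upC_singleton.mpr (hw i hi)⟩
      rw [ht] at hwmem
      exact hwmem
    obtain ⟨u, hu⟩ := hne
    refine ⟨u, ?_, fun z hz => mem_upC_singleton.mp (mem_iInter.mp hu ⟨z, hz⟩)⟩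
    exact mem_upC_singleton.mpr
      ((mem_upC_singleton.mp (hcs hy₀)).trans
        (mem_upC_singleton.mp (mem_iInter.mp hu ⟨y₀, hy₀⟩)))
  obtain ⟨m, ham, hms, hmax⟩ := zorn_le_nonempty₀ (upC ({a} : Set X)) ih a
    (mem_upC_singleton.mpr le_rfl)
  refine ⟨m, mem_upC_singleton.mp hms, fun z hmz => ?_⟩
  have hz : z ∈ upC ({a} : Set X) :=
    mem_upC_singleton.mpr ((mem_upC_singleton.mp hms).trans hmz)
  exact le_antisymm (hmax hz hmz) hmz

/-- Every point of a closed set lies above a minimal element of that set. -/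
lemma exists_min_below (hP : IsPriestley X) {F : Set X} (hF : IsClosed F) {x : X} (hx : x ∈ F) :
    ∃ v ∈ F, v ≤ x ∧ ∀ w ∈ F, w ≤ v → w = v := by
  haveI : CompactSpace X := hP.1
  classical
  let S : Set Xᵒᵈ := {w : Xᵒᵈ | OrderDual.ofDual w ∈ F ∧ OrderDual.ofDual w ≤ x}
  have ih : ∀ c ⊆ S, IsChain (· ≤ ·) c → ∀ y₀ ∈ c, ∃ ub ∈ S, ∀ z ∈ c, z ≤ ub := by
    intro c hcs hchain y₀ hy₀
    have hne : (⋂ i : c, (dwC ({(OrderDual.ofDual (i : Xᵒᵈ))} : Set X) ∩ F)).Nonempty := by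
      by_contra hemp
      obtain ⟨t, ht⟩ := IsCompact.elim_finite_subfamily_closed isCompact_univ
        (fun i : c => dwC ({(OrderDual.ofDual (i : Xᵒᵈ))} : Set X) ∩ F)
        (fun i => (isClosed_dwC_singleton hP _).inter hF)
        (by rw [univ_inter]; exact not_nonempty_iff_eq_empty.mp hemp)
      have key : ∀ t : Finset c, ∃ w ∈ c,
          ∀ i ∈ t, OrderDual.ofDual w ≤ OrderDual.ofDual (i : Xᵒᵈ) := by
        intro t
        induction t using Finset.induction_on with
        | empty => exact ⟨y₀, hy₀, by simp⟩
        | @insert i s his ih =>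
          obtain ⟨w, hwC, hw⟩ := ih
          rcases hchain.total i.2 hwC with hle | hle
          · exact ⟨w, hwC, fun j hj => by
              rcases Finset.mem_insert.mp hj with rfl | hj
              · exact hle
              · exact hw j hj⟩
          · exact ⟨i, i.2, fun j hj => by
              rcases Finset.mem_insert.mp hj with rfl | hj
              · exact le_rfl
              · exact le_trans hle (hw j hj)⟩
      obtain ⟨w, hwC, hw⟩ := key t
      have hwmem : (OrderDual.ofDual w) ∈
          univ ∩ ⋂ i ∈ t, (dwC ({(OrderDual.ofDual (i : Xᵒᵈ))} : Set X) ∩ F) :=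
        ⟨mem_univ _, mem_iInter₂.mpr fun i hi =>
          ⟨mem_dwC_singleton.mpr (hw i hi), (hcs hwC).1⟩⟩
      rw [ht] at hwmem
      exact hwmem
    obtain ⟨u, hu⟩ := hne
    refine ⟨OrderDual.toDual u, ⟨(mem_iInter.mp hu ⟨y₀, hy₀⟩).2, ?_⟩, fun z hz => ?_⟩
    · exact le_trans (mem_dwC_singleton.mp (mem_iInter.mp hu ⟨y₀, hy₀⟩).1) (hcs hy₀).2
    · exact (mem_dwC_singleton.mp ((mem_iInter.mp hu ⟨z, hz⟩).1) : u ≤ OrderDual.ofDual z)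
  obtain ⟨m, hxm, hmS, hmax⟩ := zorn_le_nonempty₀ S ih (OrderDual.toDual x) ⟨hx, le_rfl⟩
  refine ⟨OrderDual.ofDual m, hmS.1, hxm, fun w hwF hw => ?_⟩
  have hws : (OrderDual.toDual w) ∈ S := ⟨hwF, le_trans hw hxm⟩
  exact le_antisymm hw (hmax hws hw)

/-- In an L-space, every nonempty chain of localic points bounded by `x` has an
upper bound which is a localic point below `x`. -/
lemma chain_sup (hP : IsPriestley X)
    (hL : ∀ U : Set X, IsOpen U → IsUpperSet U → IsOpen (closure U) ∧ IsUpperSet (closure U))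
    {C : Set X} (hCY : C ⊆ localicPts X) (hchain : IsChain (· ≤ ·) C)
    {c₀ : X} (hc₀ : c₀ ∈ C) {x : X} (hCx : ∀ c ∈ C, c ≤ x) :
    ∃ u ∈ localicPts X, u ≤ x ∧ ∀ c ∈ C, c ≤ u := by
  haveI : CompactSpace X := hP.1
  classical
  let ι := {P : Set X // IsClopen P ∧ IsUpperSet P}
  let Z : ι → Set X := fun P => if ∃ c ∈ C, c ∈ P.val then P.val else P.valᶜ
  have hZclosed : ∀ i, IsClosed (Z i) := by
    intro i
    by_cases h : ∃ c ∈ C, c ∈ i.val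
    · simpa [Z, h] using i.2.1.isClosed
    · simpa [Z, h] using i.2.1.compl.isClosed
  have hne : (⋂ i, Z i).Nonempty := by
    by_contra hemp
    obtain ⟨t, ht⟩ := IsCompact.elim_finite_subfamily_closed isCompact_univ Z hZclosed
      (by rw [univ_inter]; exact not_nonempty_iff_eq_empty.mp hemp)
    have key : ∀ t : Finset ι, ∃ w ∈ C, ∀ i ∈ t, (∃ c ∈ C, c ∈ i.val) → w ∈ i.val := by
      intro t
      induction t using Finset.induction_on with
      | empty => exact ⟨c₀, hc₀, by simp⟩
      | @insert i s his ih =>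
        obtain ⟨w, hwC, hw⟩ := ih
        by_cases hp : ∃ c ∈ C, c ∈ i.val
        · obtain ⟨ci, hciC, hcii⟩ := hp
          rcases hchain.total hciC hwC with hle | hle
          · exact ⟨w, hwC, fun j hj _ => by
              rcases Finset.mem_insert.mp hj with rfl | hj'
              · exact j.2.2 hle hcii
              · exact hw j hj' ‹_›⟩
          · exact ⟨ci, hciC, fun j hj hpj => by
              rcases Finset.mem_insert.mp hj with rfl | hj'
              · exact hcii
              · exact j.2.2 hle (hw j hj' hpj)⟩
        · exact ⟨w, hwC, fun j hj hpj => by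
            rcases Finset.mem_insert.mp hj with rfl | hj'
            · exact absurd hpj hp
            · exact hw j hj' hpj⟩
    obtain ⟨w, hwC, hw⟩ := key t
    have hwmem : w ∈ univ ∩ ⋂ i ∈ t, Z i := by
      refine ⟨mem_univ w, mem_iInter₂.mpr fun i hi => ?_⟩
      by_cases hp : ∃ c ∈ C, c ∈ i.val
      · simpa [Z, hp] using hw i hi hp
      · simp only [Z, hp, if_false]
        exact fun hwi => hp ⟨w, hwC, hwi⟩
    rw [ht] at hwmem
    exact hwmem
  obtain ⟨u, hu⟩ := hne
  have hukey : ∀ P : Set X, IsClopen P → IsUpperSet P → (u ∈ P ↔ ∃ c ∈ C, c ∈ P) := by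
    intro P hc hup
    have hmem := mem_iInter.mp hu ⟨P, hc, hup⟩
    by_cases hp : ∃ c ∈ C, c ∈ P
    · simp only [Z, hp, if_true] at hmem
      exact ⟨fun _ => hp, fun _ => hmem⟩
    · simp only [Z, hp, if_false] at hmem
      exact ⟨fun h => absurd h hmem, fun h => absurd h hp⟩
  have hub : ∀ c ∈ C, c ≤ u := by
    intro c hcC
    by_contra hnle
    obtain ⟨P, hPc, hPu, hcP, huP⟩ := hP.2 c u hnle
    exact huP ((hukey P hPc hPu).mpr ⟨c, hcC, hcP⟩)
  have hux : u ≤ x := by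
    by_contra hnle
    obtain ⟨P, hPc, hPu, huP, hxP⟩ := hP.2 u x hnle
    obtain ⟨c, hcC, hcP⟩ := (hukey P hPc hPu).mp huP
    exact hxP (hPu (hCx c hcC) hcP)
  set O := ⋃₀ {P : Set X | IsClopen P ∧ IsUpperSet P ∧ u ∉ P} with hO
  have hOopen : IsOpen O := isOpen_sUnion (fun P hP' => hP'.1.isOpen)
  have hOup : IsUpperSet O := by
    rintro a b hab ⟨P, hP', haP⟩
    exact ⟨P, hP', hP'.2.1 hab haP⟩
  obtain ⟨hJopen, hJup⟩ := hL O hOopen hOup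
  have hJclopen : IsClopen (closure O) := ⟨isClosed_closure, hJopen⟩
  have huJ : u ∉ closure O := by
    intro huJ
    obtain ⟨c, hcC, hcJ⟩ := (hukey _ hJclopen hJup).mp huJ
    obtain ⟨w, hwdw, hwO⟩ := mem_closure_iff.mp hcJ (dwC ({c} : Set X))
      (hCY hcC).isOpen (mem_dwC_singleton.mpr le_rfl)
    obtain ⟨P₀, ⟨hP₀c, hP₀u, huP₀⟩, hwP₀⟩ := hwO
    exact huP₀ ((hukey P₀ hP₀c hP₀u).mpr
      ⟨c, hcC, hP₀u (mem_dwC_singleton.mp hwdw) hwP₀⟩)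
  have hdwu : dwC ({u} : Set X) = (closure O)ᶜ := by
    ext t
    constructor
    · intro htu htJ
      exact huJ (hJup (mem_dwC_singleton.mp htu) htJ)
    · intro ht
      by_contra hnle
      have hnle' : ¬ t ≤ u := fun h => hnle (mem_dwC_singleton.mpr h)
      obtain ⟨P, hPc, hPu, htP, huP⟩ := hP.2 t u hnle'
      exact ht (subset_closure ⟨P, ⟨hPc, hPu, huP⟩, htP⟩)
  refine ⟨u, ?_, hux, hub⟩
  show IsClopen (dwC ({u} : Set X))
  rw [hdwu]
  exact hJclopen.compl

/-- Every localic point below `x` lies below a maximal element of `↓x ∩ Y`. -/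
lemma exists_max_localic (hP : IsPriestley X)
    (hL : ∀ U : Set X, IsOpen U → IsUpperSet U → IsOpen (closure U) ∧ IsUpperSet (closure U))
    {x v : X} (hv : v ∈ localicPts X) (hvx : v ≤ x) :
    ∃ m ∈ maxOf (dwC ({x} : Set X) ∩ localicPts X), v ≤ m := by
  classical
  have ih : ∀ c ⊆ dwC ({x} : Set X) ∩ localicPts X, IsChain (· ≤ ·) c → ∀ y₀ ∈ c,
      ∃ ub ∈ dwC ({x} : Set X) ∩ localicPts X, ∀ z ∈ c, z ≤ ub := by
    intro c hcs hchain y₀ hy₀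
    obtain ⟨u, huY, hux, hub⟩ := chain_sup hP hL (fun z hz => (hcs hz).2) hchain hy₀
      (fun z hz => mem_dwC_singleton.mp (hcs hz).1)
    exact ⟨u, ⟨mem_dwC_singleton.mpr hux, huY⟩, hub⟩
  obtain ⟨m, hvm, hmS, hmax⟩ := zorn_le_nonempty₀ (dwC ({x} : Set X) ∩ localicPts X) ih v
    ⟨mem_dwC_singleton.mpr hvx, hv⟩
  exact ⟨m, ⟨hmS, fun z hz hmz => le_antisymm (hmax hz hmz) hmz⟩, hvm⟩

/-- Separation of localic points by clopen Scott upsets (uses algebraicity). -/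
lemma scott_sep (hP : IsPriestley X)
    (hAlg : ∀ U : Set X, IsClopen U → IsUpperSet U → U ⊆ closure (coreC U))
    {y z : X} (hy : y ∈ localicPts X) (hz : z ∈ localicPts X) (h : ¬ z ≤ y) :
    ∃ V ∈ ClopSUp X, z ∈ V ∧ y ∉ V := by
  have hU₀c : IsClopen ((dwC ({y} : Set X))ᶜ) := hy.compl
  have hU₀u : IsUpperSet ((dwC ({y} : Set X))ᶜ) := (dwC_isLowerSet _).compl
  have hzU : z ∈ (dwC ({y} : Set X))ᶜ := fun hmem => h (mem_dwC_singleton.mp hmem)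
  have hcl := hAlg _ hU₀c hU₀u hzU
  obtain ⟨w, hwdw, hwcore⟩ := mem_closure_iff.mp hcl (dwC ({z} : Set X)) hz.isOpen
    (mem_dwC_singleton.mpr le_rfl)
  obtain ⟨V, ⟨hVmem, hVU⟩, hwV⟩ := hwcore
  refine ⟨V, hVmem, hVmem.2.2.1 (mem_dwC_singleton.mp hwdw) hwV, fun hyV => ?_⟩
  exact (hVU hyV) (mem_dwC_singleton.mpr le_rfl)

/-- Every maximal point belongs to `N`. -/
lemma max_mem_N (N : Set X)
    (hNd : ∀ U : Set X, IsClopen U → IsUpperSet U → jN N U = dOp U)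
    {m : X} (hm : ∀ z, m ≤ z → z = m) : m ∈ N := by
  by_contra hmN
  have h1 : m ∈ jN N (∅ : Set X) := by
    simp only [jN, mem_compl_iff]
    rintro ⟨b, ⟨hbN, -⟩, hmb⟩
    exact hmN ((hm b hmb) ▸ hbN)
  rw [hNd ∅ isClopen_empty isUpperSet_empty] at h1
  have hS : ⋃₀ {W : Set X | ∃ V ∈ ClopSUp X, V ⊆ (∅ : Set X) ∧ W = starC (starC V)}
      = (∅ : Set X) := by
    rw [sUnion_eq_empty]
    rintro W ⟨V, hV, hVsub, rfl⟩
    have hVe : V = ∅ := subset_empty_iff.mp hVsub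
    subst hVe
    have h1 : dwC (∅ : Set X) = ∅ := by ext w; simp [dwC]
    have h2 : starC (∅ : Set X) = univ := by rw [starC, h1, compl_empty]
    have h3 : dwC (univ : Set X) = univ :=
      eq_univ_of_forall (fun w => ⟨w, mem_univ w, le_rfl⟩)
    rw [h2, starC, h3, compl_univ]
  rw [dOp, hS, closure_empty] at h1
  exact h1

end StatementEightHelpers

/-- Let `X` be an arithmetic L-space, `N = N_d` the nuclear subset
whose nucleus `j_N` is the `d`-nucleus, and `y ∈ Y` a localic point. TFAE:
(1) `y ∈ Y_d = N_d ∩ Y`;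
(2) for every clopen upset `U`, `y ∈ core_d U → y ∈ U`;
(3) for every `V ∈ ClopSUp X`, `max ↑y ⊆ V → y ∈ V`;
(4) `{y} = max (↓x ∩ Y)` for some `x ∈ max X`. -/
theorem statement8 (hX : IsArithmeticLSpace X)
    (N : Set X) (hN : IsNuclearSub N)
    (hNd : ∀ U : Set X, IsClopen U → IsUpperSet U → jN N U = dOp U)
    (y : X) (hy : y ∈ localicPts X) :
    List.TFAE
      [y ∈ N ∩ localicPts X,
       ∀ U : Set X, IsClopen U → IsUpperSet U → y ∈ coreD U → y ∈ U,
       ∀ V ∈ ClopSUp X, maxOf (upC ({y} : Set X)) ⊆ V → y ∈ V,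
       ∃ x ∈ maxOf (Set.univ : Set X),
         ({y} : Set X) = maxOf (dwC ({x} : Set X) ∩ localicPts X)] := by
  classical
  obtain ⟨⟨⟨hP, hL⟩, hAlg⟩, -⟩ := hX
  tfae_have 1 → 2 := by
    rintro ⟨hyN, -⟩ U hUc hUu hyc
    obtain ⟨W, ⟨V, hV, hVU, rfl⟩, hyW⟩ := hyc
    rw [← hNd V hV.1 hV.2.2.1] at hyW
    have hyV : y ∈ V := by
      by_contra hyV
      exact hyW ⟨y, ⟨hyN, hyV⟩, le_rfl⟩
    exact hVU hyV
  tfae_have 2 → 3 := by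
    intro h2 V hV hmax
    apply h2 V hV.1 hV.2.2.1
    refine ⟨dOp V, ⟨V, hV, subset_rfl, rfl⟩, ?_⟩
    apply subset_closure
    refine ⟨starC (starC V), ⟨V, hV, subset_rfl, rfl⟩, ?_⟩
    rintro ⟨b, hb, hyb⟩
    obtain ⟨m, hbm, hmmax⟩ := exists_max_above hP b
    have hmup : m ∈ maxOf (upC ({y} : Set X)) :=
      ⟨mem_upC_singleton.mpr (hyb.trans hbm), fun z _ hmz => hmmax z hmz⟩
    exact hb ⟨m, hmax hmup, hbm⟩
  tfae_have 3 → 1 := by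
    intro h3
    refine ⟨?_, hy⟩
    by_contra hyN
    have hU₀c : IsClopen ((dwC ({y} : Set X))ᶜ) := hy.compl
    have hU₀u : IsUpperSet ((dwC ({y} : Set X))ᶜ) := (dwC_isLowerSet _).compl
    have hyd : y ∈ jN N ((dwC ({y} : Set X))ᶜ) := by
      simp only [jN, mem_compl_iff]
      rintro ⟨b, ⟨hbN, hbU⟩, hyb⟩
      have hby : b ≤ y := mem_dwC_singleton.mp (not_not.mp hbU)
      exact hyN (le_antisymm hby hyb ▸ hbN)
    rw [hNd _ hU₀c hU₀u] at hyd
    obtain ⟨w, hwdw, hwmem⟩ := mem_closure_iff.mp hyd (dwC ({y} : Set X)) hy.isOpen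
      (mem_dwC_singleton.mpr le_rfl)
    obtain ⟨W, ⟨V, hV, hVU, rfl⟩, hwW⟩ := hwmem
    have hup : IsUpperSet (starC (starC V)) := (dwC_isLowerSet _).compl
    have hyVss : y ∈ starC (starC V) := hup (mem_dwC_singleton.mp hwdw) hwW
    have hmaxsub : maxOf (upC ({y} : Set X)) ⊆ V := by
      rintro m ⟨hmup, hmmax⟩
      have hym : y ≤ m := mem_upC_singleton.mp hmup
      have hmmax' : ∀ z, m ≤ z → z = m := fun z hz =>
        hmmax z (mem_upC_singleton.mpr (hym.trans hz)) hz
      by_contra hmV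
      apply hyVss
      refine ⟨m, ?_, hym⟩
      rintro ⟨p, hpV, hmp⟩
      exact hmV ((hmmax' p hmp) ▸ hpV)
    have hyV := h3 V hV hmaxsub
    exact (hVU hyV) (mem_dwC_singleton.mpr le_rfl)
  tfae_have 3 → 4 := by
    intro h3
    have hexx : ∃ x, (∀ z, x ≤ z → z = x) ∧ y ≤ x ∧
        ∀ V ∈ ClopSUp X, y ∉ V → x ∉ V := by
      by_contra hno
      push_neg at hno
      have hcover : upC ({y} : Set X) ⊆
          ⋃ i : {V : Set X // V ∈ ClopSUp X ∧ y ∉ V}, dwC (i.val ∩ N) := by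
        intro z hz
        obtain ⟨m, hzm, hmmax⟩ := exists_max_above hP z
        have hym : y ≤ m := (mem_upC_singleton.mp hz).trans hzm
        obtain ⟨V, hV, hyV, hmV⟩ := hno m hmmax hym
        have hmN : m ∈ N := max_mem_N N hNd hmmax
        exact mem_iUnion.mpr ⟨⟨V, hV, hyV⟩, ⟨m, ⟨hmV, hmN⟩, hzm⟩⟩
      have hcomp : IsCompact (upC ({y} : Set X)) := by
        haveI : CompactSpace X := hP.1
        exact (isClosed_upC_singleton hP y).isCompact
      obtain ⟨t, ht⟩ := hcomp.elim_finite_subcover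
        (fun i : {V : Set X // V ∈ ClopSUp X ∧ y ∉ V} => dwC (i.val ∩ N))
        (fun i => (hN.2 i.val i.2.1.1).isOpen) hcover
      set Vs := ⋃ i ∈ t, (i : {V : Set X // V ∈ ClopSUp X ∧ y ∉ V}).val with hVs
      have hVsclopen : IsClopen Vs := isClopen_biUnion_finset (fun i _ => i.2.1.1)
      have hVsupset : IsUpperSet Vs := by
        intro a b hab ha
        simp only [hVs, mem_iUnion] at ha ⊢
        obtain ⟨i, hi, hai⟩ := ha
        exact ⟨i, hi, i.2.1.2.2.1 hab hai⟩
      have hVsmin : minOf Vs ⊆ localicPts X := by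
        rintro v ⟨hv, hvmin⟩
        simp only [hVs, mem_iUnion] at hv
        obtain ⟨i, hi, hvi⟩ := hv
        refine i.2.1.2.2.2 ⟨hvi, fun w hw hwv => ?_⟩
        exact hvmin w (by simp only [hVs, mem_iUnion]; exact ⟨i, hi, hw⟩) hwv
      have hVsmem : Vs ∈ ClopSUp X := ⟨hVsclopen, hVsclopen.isClosed, hVsupset, hVsmin⟩
      have hyVs : y ∉ Vs := by
        intro hyv
        simp only [hVs, mem_iUnion] at hyv
        obtain ⟨i, hi, hyi⟩ := hyv
        exact i.2.2 hyi
      have hmaxsub : maxOf (upC ({y} : Set X)) ⊆ Vs := by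
        rintro m ⟨hmup, hmmax⟩
        have hym : y ≤ m := mem_upC_singleton.mp hmup
        have hmmax' : ∀ z, m ≤ z → z = m := fun z hz =>
          hmmax z (mem_upC_singleton.mpr (hym.trans hz)) hz
        have hmcov := ht hmup
        simp only [mem_iUnion] at hmcov
        obtain ⟨i, hi, p, ⟨hpV, hpN⟩, hmp⟩ := hmcov
        have hpm : p = m := hmmax' p hmp
        subst hpm
        simp only [hVs, mem_iUnion]
        exact ⟨i, hi, hpV⟩
      exact hyVs (h3 Vs hVsmem hmaxsub)
    obtain ⟨x, hxmax, hyx, hxavoid⟩ := hexx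
    refine ⟨x, ⟨mem_univ x, fun z _ hz => hxmax z hz⟩, ?_⟩
    ext z
    simp only [mem_singleton_iff]
    constructor
    · rintro rfl
      refine ⟨⟨mem_dwC_singleton.mpr hyx, hy⟩, ?_⟩
      rintro w ⟨hwdw, hwY⟩ hyw
      have hwy : w ≤ z := by
        by_contra hnwy
        obtain ⟨V, hV, hwV, hyV⟩ := scott_sep hP hAlg hy hwY hnwy
        exact hxavoid V hV hyV (hV.2.2.1 (mem_dwC_singleton.mp hwdw) hwV)
      exact le_antisymm hwy hyw
    · rintro ⟨⟨hzdw, hzY⟩, hzmax⟩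
      have hzy : z ≤ y := by
        by_contra hnzy
        obtain ⟨V, hV, hzV, hyV⟩ := scott_sep hP hAlg hy hzY hnzy
        exact hxavoid V hV hyV (hV.2.2.1 (mem_dwC_singleton.mp hzdw) hzV)
      exact (hzmax y ⟨mem_dwC_singleton.mpr hyx, hy⟩ hzy).symm
  tfae_have 4 → 3 := by
    rintro ⟨x, ⟨-, hxmax⟩, heq⟩ V hV hmaxsub
    have hymem : y ∈ maxOf (dwC ({x} : Set X) ∩ localicPts X) := by
      rw [← heq]; exact mem_singleton y
    have hyx : y ≤ x := mem_dwC_singleton.mp hymem.1.1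
    have hxV : x ∈ V := hmaxsub ⟨mem_upC_singleton.mpr hyx,
      fun z _ hz => hxmax z (mem_univ z) hz⟩
    have hFclosed : IsClosed (V ∩ dwC ({x} : Set X)) :=
      hV.2.1.inter (isClosed_dwC_singleton hP x)
    obtain ⟨v, ⟨hvV, hvdw⟩, hvx, hvmin⟩ := exists_min_below hP hFclosed
      ⟨hxV, mem_dwC_singleton.mpr le_rfl⟩
    have hvminV : v ∈ minOf V := by
      refine ⟨hvV, fun w hwV hwv => ?_⟩
      exact hvmin w ⟨hwV, mem_dwC_singleton.mpr
        (hwv.trans (mem_dwC_singleton.mp hvdw))⟩ hwv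
    have hvY : v ∈ localicPts X := hV.2.2.2 hvminV
    obtain ⟨m, hmmem, hvm⟩ := exists_max_localic hP hL hvY (mem_dwC_singleton.mp hvdw)
    have hmy : m = y := by
      have h' : m ∈ ({y} : Set X) := heq ▸ hmmem
      exact h'
    exact hV.2.2.1 (hmy ▸ hvm) hvV
  tfae_finish
end
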